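/- Let ψ₀ be a SIC fiducial vector in odd dimension d. Then the (d+1)/2 vectors x_0, …, x_{(d−1)/2} defined by (x_0)_i = √((d+1)/2)·ψ₀(i)² and, for r ≠ 0, (x_r)_i = √(d+1)·ψ₀(i − 2^{−1}r)·ψ₀(i + 2^{−1}r), form an orthonormal set in ℂ^{ℤ/dℤ}: ⟨x_s, x_r⟩ = δ_{rs}. -/

import Mathlib

/-!
For odd `d` we have `τ = e(2⁻¹)`, where `e = ZMod.stdAddChar`, so the displacement operators
act by `(D_{i,j} ψ)(r) = e(j (r - 2⁻¹ i)) ψ(r - i)`. Thus `j ↦ ⟨ψ, D_{i,j} ψ⟩` is a discrete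
Fourier transform, and Fourier inversion in `j` turns the SIC condition
`|⟨ψ, D_{i,j} ψ⟩|² = (1 + d δ_{(i,j),0}) / (d + 1)` into the quartic identity
`∑ᵣ ψ̄(r) ψ(r - i) ψ(r + c) ψ̄(r + c - i) = (δ_{i,0} + δ_{c,0}) / (d + 1)`.
With `i = 2⁻¹ (r - s)` and `c = 2⁻¹ (r + s)` its right-hand side is
`(δ_{r,s} + δ_{r,-s}) / (d + 1)`, which, up to the normalising constants, is the Gram matrix of
the `x_r`; for `0 ≤ r, s ≤ (d - 1) / 2` the second delta only fires at `r = s = 0`, where it is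
compensated by the constant `√((d + 1) / 2)`.
-/

open Matrix Complex

/-- `τ = -exp(iπ/d)`. -/
noncomputable def tau (d : ℕ) : ℂ := -Complex.exp (Real.pi * Complex.I / d)

/-- The displacement operator `D_p = D_{i,j}`, with `(r,s)` entry
`τ^{ij+2js} δ_{r,s+i}` (exponents of the `d`-th root of unity `τ` taken mod `d`). -/
noncomputable def Disp (d : ℕ) [NeZero d] (p : ZMod d × ZMod d) :
    Matrix (ZMod d) (ZMod d) ℂ :=
  Matrix.of fun r s =>
    tau d ^ ((p.1 * p.2 + 2 * p.2 * s).val) * (if r = s + p.1 then 1 else 0)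

/-- The standard Hermitian inner product `⟨x, y⟩`, antilinear in the first slot. -/
noncomputable def cInner {n : Type*} [Fintype n] (x y : n → ℂ) : ℂ :=
  ∑ k, star (x k) * y k

/-- The components of `√((d+1)/2)·ψ₀ ⊗ ψ₀` in the symmetric blocks of the
doubled Weyl representation:
`(x_0)_i = √((d+1)/2)·ψ₀(i)²` and, for `r ≠ 0`,
`(x_r)_i = √(d+1)·ψ₀(i - 2⁻¹r)·ψ₀(i + 2⁻¹r)`. -/
noncomputable def sicX (d : ℕ) [NeZero d] (ψ₀ : ZMod d → ℂ) (r : ℕ) :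
    ZMod d → ℂ :=
  if r = 0 then
    fun i => (Real.sqrt (((d : ℝ) + 1) / 2) : ℂ) * ψ₀ i ^ 2
  else
    fun i => (Real.sqrt ((d : ℝ) + 1) : ℂ) *
      ψ₀ (i - (2 : ZMod d)⁻¹ * (r : ZMod d)) * ψ₀ (i + (2 : ZMod d)⁻¹ * (r : ZMod d))

open ZMod

section StdAddChar

variable {N : ℕ} [NeZero N]

lemma star_stdAddChar (x : ZMod N) : star (stdAddChar x) = stdAddChar (-x) := by
  rw [stdAddChar_apply, stdAddChar_apply, AddChar.map_neg_eq_inv, Circle.coe_inv_eq_conj]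
  rfl

lemma sum_stdAddChar_mul (b : ZMod N) :
    ∑ x, stdAddChar (x * b) = if b = 0 then (N : ℂ) else 0 := by
  rw [AddChar.sum_mulShift b (isPrimitive_stdAddChar N), ZMod.card, Nat.cast_ite, Nat.cast_zero]

lemma norm_sq_sum_stdAddChar_mul (A : ZMod N → ℂ) (j t : ZMod N) :
    ((‖∑ r, stdAddChar (j * (r - t)) * A r‖ ^ 2 : ℝ) : ℂ)
      = ∑ r, ∑ r', stdAddChar (j * (r - r')) * (A r * star (A r')) := by
  rw [Complex.ofReal_pow, ← Complex.mul_conj', ← Complex.star_def, star_sum, Finset.sum_mul_sum]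
  refine Finset.sum_congr rfl fun r _ => Finset.sum_congr rfl fun r' _ => ?_
  rw [star_mul', star_stdAddChar, mul_mul_mul_comm, ← AddChar.map_add_eq_mul]
  ring_nf

lemma sum_stdAddChar_mul_sum_sum (B : ZMod N → ZMod N → ℂ) (c : ZMod N) :
    ∑ j, stdAddChar (c * j) * ∑ r, ∑ r', stdAddChar (j * (r - r')) * B r r'
      = N * ∑ r, B r (r + c) := by
  have hchar : ∀ r r', ∑ j, stdAddChar (c * j) * stdAddChar (j * (r - r'))
      = if r' = r + c then (N : ℂ) else 0 := fun r r' => by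
    simp_rw [← AddChar.map_add_eq_mul]
    have : ∀ j : ZMod N, c * j + j * (r - r') = j * (r + c - r') := fun j => by ring
    simp_rw [this, sum_stdAddChar_mul, sub_eq_zero, eq_comm]
  simp_rw [Finset.mul_sum]
  rw [Finset.sum_comm]
  refine Finset.sum_congr rfl fun r _ => ?_
  rw [Finset.sum_comm]
  simp_rw [← mul_assoc, ← Finset.sum_mul, hchar, ite_mul, zero_mul, Finset.sum_ite_eq',
    Finset.mem_univ, if_true]

end StdAddChar

section Odd

variable {d : ℕ} (hodd : Odd d)
include hodd

lemma two_mul_two_inv_of_odd : (2 : ZMod d) * 2⁻¹ = 1 :=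
  ZMod.mul_inv_of_unit 2 <| by
    simpa using (ZMod.isUnit_iff_coprime 2 d).mpr (Nat.coprime_two_left.mpr hodd)

lemma two_inv_mul_eq_zero_iff (x : ZMod d) : (2 : ZMod d)⁻¹ * x = 0 ↔ x = 0 :=
  (IsUnit.of_mul_eq_one_right _ (two_mul_two_inv_of_odd hodd)).mul_right_eq_zero

variable [NeZero d]

lemma tau_eq_stdAddChar : tau d = stdAddChar (2⁻¹ : ZMod d) := by
  have h2 := two_mul_two_inv_of_odd hodd
  obtain ⟨m, rfl⟩ := hodd
  have hinv : (2 : ZMod (2 * m + 1))⁻¹ = ((m + 1 : ℕ) : ZMod (2 * m + 1)) := by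
    have hm : (2 : ZMod (2 * m + 1)) * ((m + 1 : ℕ) : ZMod (2 * m + 1)) = 1 := by
      have := ZMod.natCast_self (2 * m + 1)
      push_cast at this ⊢
      linear_combination this
    linear_combination ((m + 1 : ℕ) : ZMod (2 * m + 1)) * h2 - (2 : ZMod (2 * m + 1))⁻¹ * hm
  have hd : ((2 * m + 1 : ℕ) : ℂ) ≠ 0 := Nat.cast_ne_zero.mpr (by omega)
  rw [hinv, stdAddChar_apply, toCircle_natCast, tau]
  have : 2 * (Real.pi : ℂ) * I * ((m + 1 : ℕ) : ℂ) / ((2 * m + 1 : ℕ) : ℂ)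
      = Real.pi * I / ((2 * m + 1 : ℕ) : ℂ) + Real.pi * I := by
    field_simp
    push_cast
    ring
  rw [this, Complex.exp_add, Complex.exp_pi_mul_I]
  ring

lemma tau_pow_val (n : ZMod d) : tau d ^ n.val = stdAddChar (2⁻¹ * n) := by
  rw [tau_eq_stdAddChar hodd, ← AddChar.map_nsmul_eq_pow, nsmul_eq_mul, ZMod.natCast_zmod_val,
    mul_comm]

end Odd

lemma disp_zero (d : ℕ) [NeZero d] : Disp d 0 = 1 := by
  ext r s
  simp [Disp, Matrix.one_apply]

lemma disp_mulVec_apply {d : ℕ} [NeZero d] (hodd : Odd d) (ψ : ZMod d → ℂ) (i j r : ZMod d) :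
    (Disp d (i, j)).mulVec ψ r = stdAddChar (j * (r - 2⁻¹ * i)) * ψ (r - i) := by
  have hr : ∀ s, r = s + i ↔ s = r - i := fun s => by rw [eq_sub_iff_add_eq, eq_comm]
  simp only [Matrix.mulVec, dotProduct, Disp, of_apply, hr, mul_ite, mul_one, mul_zero, ite_mul,
    zero_mul, Finset.sum_ite_eq', Finset.mem_univ, if_true, tau_pow_val hodd]
  congr 2
  linear_combination (j * r) * two_mul_two_inv_of_odd hodd

def IsSICFiducial (d : ℕ) [NeZero d] (ψ : ZMod d → ℂ) : Prop :=
  cInner ψ ψ = 1 ∧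
    ∀ p : ZMod d × ZMod d, p ≠ 0 → ‖cInner ψ ((Disp d p).mulVec ψ)‖ ^ 2 = 1 / (d + 1)

noncomputable def sicXScale (d r : ℕ) : ℝ :=
  if r = 0 then √(((d : ℝ) + 1) / 2) else √((d : ℝ) + 1)

lemma sicX_apply {d : ℕ} [NeZero d] (ψ : ZMod d → ℂ) (r : ℕ) (i : ZMod d) :
    sicX d ψ r i = sicXScale d r * (ψ (i - 2⁻¹ * r) * ψ (i + 2⁻¹ * r)) := by
  by_cases hr : r = 0
  · subst hr
    simp [sicX, sicXScale, sq]
  · simp [sicX, sicXScale, hr, mul_assoc]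

lemma cInner_sicX {d : ℕ} [NeZero d] (ψ : ZMod d → ℂ) (r s : ℕ) :
    cInner (sicX d ψ s) (sicX d ψ r) = (sicXScale d s * sicXScale d r : ℝ) * ∑ i,
      star (ψ (i - 2⁻¹ * s)) * star (ψ (i + 2⁻¹ * s)) * (ψ (i - 2⁻¹ * r) * ψ (i + 2⁻¹ * r)) := by
  rw [cInner, Finset.mul_sum]
  refine Finset.sum_congr rfl fun i _ => ?_
  rw [sicX_apply, sicX_apply, star_mul', star_mul', Complex.star_def, Complex.conj_ofReal]
  push_cast
  ring

lemma ZMod.natCast_eq_neg_natCast_iff {d r s : ℕ} (h : r + s < d) :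
    (r : ZMod d) = -s ↔ r = 0 ∧ s = 0 := by
  rw [eq_neg_iff_add_eq_zero, ← Nat.cast_add, ZMod.natCast_eq_zero_iff]
  exact ⟨fun hdvd => Nat.add_eq_zero_iff.mp (Nat.eq_zero_of_dvd_of_lt hdvd h),
    fun ⟨hr, hs⟩ => by simp [hr, hs]⟩

section SICFiducial

variable {d : ℕ} [NeZero d] {ψ : ZMod d → ℂ}

lemma cInner_disp_mulVec (hodd : Odd d) (i j : ZMod d) :
    cInner ψ ((Disp d (i, j)).mulVec ψ)
      = ∑ r, stdAddChar (j * (r - 2⁻¹ * i)) * (star (ψ r) * ψ (r - i)) := by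
  refine Finset.sum_congr rfl fun r _ => ?_
  rw [disp_mulVec_apply hodd]
  ring

lemma sum_stdAddChar_mul_norm_sq_cInner_disp (hodd : Odd d) (i c : ZMod d) :
    ∑ j, stdAddChar (c * j) * ((‖cInner ψ ((Disp d (i, j)).mulVec ψ)‖ ^ 2 : ℝ) : ℂ)
      = d * ∑ r, star (ψ r) * ψ (r - i) * ψ (r + c) * star (ψ (r + c - i)) := by
  simp_rw [cInner_disp_mulVec hodd, norm_sq_sum_stdAddChar_mul, sum_stdAddChar_mul_sum_sum,
    star_mul', star_star, add_sub_right_comm, mul_assoc]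

lemma IsSICFiducial.norm_sq_cInner_disp (hψ : IsSICFiducial d ψ) (i j : ZMod d) :
    ((‖cInner ψ ((Disp d (i, j)).mulVec ψ)‖ ^ 2 : ℝ) : ℂ)
      = 1 / (d + 1) + if j = 0 then (if i = 0 then (d : ℂ) / (d + 1) else 0) else 0 := by
  by_cases hp : ((i, j) : ZMod d × ZMod d) = 0
  · obtain ⟨rfl, rfl⟩ := Prod.mk_eq_zero.mp hp
    rw [hp, disp_zero, Matrix.one_mulVec, hψ.1, norm_one, one_pow, Complex.ofReal_one,
      if_pos rfl, if_pos rfl]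
    field_simp
    ring
  · rw [hψ.2 _ hp]
    have : ¬ (j = 0 ∧ i = 0) := fun h => hp (Prod.mk_eq_zero.mpr ⟨h.2, h.1⟩)
    split_ifs <;> simp_all

lemma IsSICFiducial.sum_quartic (hodd : Odd d) (hψ : IsSICFiducial d ψ) (i c : ZMod d) :
    ∑ r, star (ψ r) * ψ (r - i) * ψ (r + c) * star (ψ (r + c - i))
      = ((if i = 0 then 1 else 0) + (if c = 0 then 1 else 0)) / (d + 1) := by
  have hd : (d : ℂ) ≠ 0 := Nat.cast_ne_zero.mpr (NeZero.ne d)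
  refine mul_left_cancel₀ hd ((sum_stdAddChar_mul_norm_sq_cInner_disp hodd i c).symm.trans ?_)
  simp_rw [hψ.norm_sq_cInner_disp, mul_add, Finset.sum_add_distrib, ← Finset.sum_mul, mul_comm c,
    sum_stdAddChar_mul, mul_ite, mul_zero, Finset.sum_ite_eq', Finset.mem_univ, if_true,
    zero_mul, AddChar.map_zero_eq_one, one_mul]
  split_ifs <;> field_simp <;> ring

lemma IsSICFiducial.sum_star_mul_star_mul (hodd : Odd d) (hψ : IsSICFiducial d ψ)
    (a b : ZMod d) :
    ∑ i, star (ψ (i - 2⁻¹ * b)) * star (ψ (i + 2⁻¹ * b)) * (ψ (i - 2⁻¹ * a) * ψ (i + 2⁻¹ * a))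
      = ((if a = b then 1 else 0) + (if a = -b then 1 else 0)) / (d + 1) := by
  have hsub : 2⁻¹ * (a - b) = 0 ↔ a = b := by rw [two_inv_mul_eq_zero_iff hodd, sub_eq_zero]
  have hadd : 2⁻¹ * (a + b) = 0 ↔ a = -b := by
    rw [two_inv_mul_eq_zero_iff hodd, add_eq_zero_iff_eq_neg]
  calc _ = ∑ r, star (ψ r) * ψ (r - 2⁻¹ * (a - b)) * ψ (r + 2⁻¹ * (a + b))
        * star (ψ (r + 2⁻¹ * (a + b) - 2⁻¹ * (a - b))) :=
      Fintype.sum_equiv (Equiv.subRight (2⁻¹ * b)) _ _ fun i => by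
        simp only [Equiv.subRight_apply]
        ring_nf
    _ = _ := by rw [hψ.sum_quartic hodd]; simp_rw [hsub, hadd]

lemma IsSICFiducial.cInner_sicX_self (hodd : Odd d) (hψ : IsSICFiducial d ψ) {r : ℕ}
    (hr : 2 * r < d) : cInner (sicX d ψ r) (sicX d ψ r) = 1 := by
  have hneg : (r : ZMod d) = -r ↔ r = 0 := by
    rw [ZMod.natCast_eq_neg_natCast_iff (by omega), and_self]
  rw [cInner_sicX, hψ.sum_star_mul_star_mul hodd, if_pos rfl, sicXScale]
  by_cases hr0 : r = 0
  · rw [if_pos hr0, if_pos (hneg.mpr hr0), Real.mul_self_sqrt (by positivity)]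
    push_cast
    field_simp
    ring
  · rw [if_neg hr0, if_neg (mt hneg.mp hr0), Real.mul_self_sqrt (by positivity), add_zero]
    push_cast
    field_simp

lemma IsSICFiducial.cInner_sicX_of_ne (hodd : Odd d) (hψ : IsSICFiducial d ψ) {r s : ℕ}
    (hrs : r ≠ s) (h : r + s < d) : cInner (sicX d ψ s) (sicX d ψ r) = 0 := by
  have hne : (r : ZMod d) ≠ s := by
    rw [Ne, ZMod.natCast_eq_natCast_iff', Nat.mod_eq_of_lt (by omega), Nat.mod_eq_of_lt (by omega)]
    exact hrs
  have hne_neg : (r : ZMod d) ≠ -s := by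
    rw [Ne, ZMod.natCast_eq_neg_natCast_iff h]
    omega
  rw [cInner_sicX, hψ.sum_star_mul_star_mul hodd, if_neg hne, if_neg hne_neg]
  simp

end SICFiducial

theorem sicX_orthonormal_general
    (d : ℕ) [NeZero d] (hodd : Odd d)
    (ψ₀ : ZMod d → ℂ)
    (hunit : cInner ψ₀ ψ₀ = 1)
    (hsic : ∀ p : ZMod d × ZMod d, p ≠ 0 →
      ‖cInner ψ₀ ((Disp d p).mulVec ψ₀)‖ ^ 2 = 1 / (d + 1)) :
    ∀ r s : ℕ, r ≤ (d - 1) / 2 → s ≤ (d - 1) / 2 →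
      cInner (sicX d ψ₀ s) (sicX d ψ₀ r) = if r = s then 1 else 0 := by
  intro r s hr hs
  have hψ : IsSICFiducial d ψ₀ := ⟨hunit, hsic⟩
  have hlt : r + s < d := by
    obtain ⟨m, rfl⟩ := hodd
    omega
  split_ifs with hrs
  · subst hrs
    exact hψ.cInner_sicX_self hodd (by omega)
  · exact hψ.cInner_sicX_of_ne hodd hrs hlt

/-- For a SIC fiducial vector `ψ₀` in odd dimension `d`, the `(d+1)/2` vectors
`x_0, …, x_{(d-1)/2}` form an orthonormal set in `ℂ^{ℤ/dℤ}`. -/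
theorem sicX_orthonormal
    (d : ℕ) [NeZero d] (hodd : Odd d) (hd : 3 ≤ d)
    (ψ₀ : ZMod d → ℂ)
    (hunit : cInner ψ₀ ψ₀ = 1)
    (hsic : ∀ p : ZMod d × ZMod d, p ≠ 0 →
      ‖cInner ψ₀ ((Disp d p).mulVec ψ₀)‖ ^ 2 = 1 / (d + 1)) :
    ∀ r s : ℕ, r ≤ (d - 1) / 2 → s ≤ (d - 1) / 2 →
      cInner (sicX d ψ₀ s) (sicX d ψ₀ r) = if r = s then 1 else 0 :=
  sicX_orthonormal_general d hodd ψ₀ hunit hsic
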